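/- arXiv:1805.10961 — 2 statements merged into one kernel-verified Lean document; each statement's English description precedes it below -/
import Mathlib

section
/- Let $\Omega \subset \mathbb{R}^n$ be an open connected set such that for every boundary point $p \in \partial\Omega$ there exists an open neighborhood $N_p$ of $p$ with $\Omega \cap N_p$ convex. Then $\Omega$ is convex. -/
open AffineMap Set Metric

section Aux

variable {E : Type*} [NormedAddCommGroup E] [NormedSpace ℝ E]

/-- Key local-to-global step: if `Ω` is open and locally convex at boundary points, and a
segment with endpoints in `Ω` lies in the closure of `Ω`, then it lies in `Ω`. -/
lemma tn_key {Ω : Set E} (hopen : IsOpen Ω)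
    (hloc : ∀ p ∈ frontier Ω, ∃ N : Set E, IsOpen N ∧ p ∈ N ∧ Convex ℝ (Ω ∩ N))
    {a b : E} (ha : a ∈ Ω) (hb : b ∈ Ω)
    (hseg : segment ℝ a b ⊆ closure Ω) : segment ℝ a b ⊆ Ω := by
  set γ : ℝ → E := fun t => a + t • (b - a) with hγ
  have hγcont : Continuous γ :=
    continuous_const.add ((continuous_id.smul continuous_const))
  have hγseg : segment ℝ a b = γ '' Icc (0:ℝ) 1 := segment_eq_image' ℝ a b
  by_contra hcon
  -- the set of bad parameters
  have hsegγ : ∀ t ∈ Icc (0:ℝ) 1, γ t ∈ closure Ω := by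
    intro t ht
    exact hseg (hγseg ▸ mem_image_of_mem _ ht)
  set T : Set ℝ := Icc (0:ℝ) 1 ∩ γ ⁻¹' Ωᶜ with hT
  have hTne : T.Nonempty := by
    rw [Set.not_subset] at hcon
    obtain ⟨z, hz, hzΩ⟩ := hcon
    rw [hγseg] at hz
    obtain ⟨t, ht, rfl⟩ := hz
    exact ⟨t, ht, hzΩ⟩
  have hTclosed : IsClosed T := isClosed_Icc.inter (hopen.isClosed_compl.preimage hγcont)
  have hTbdd : BddBelow T := ⟨0, fun t ht => ht.1.1⟩
  set t₀ : ℝ := sInf T with ht₀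
  have ht₀T : t₀ ∈ T := hTclosed.csInf_mem hTne hTbdd
  have ht₀mem : t₀ ∈ Icc (0:ℝ) 1 := ht₀T.1
  have hpnot : γ t₀ ∉ Ω := ht₀T.2
  -- t₀ > 0
  have ht₀pos : 0 < t₀ := by
    have h0 : γ 0 = a := by simp [hγ]
    have : ∀ᶠ t in nhds (0:ℝ), γ t ∈ Ω := by
      have := hγcont.continuousAt (x := (0:ℝ))
      exact this.preimage_mem_nhds (h0 ▸ hopen.mem_nhds ha)
    obtain ⟨δ, hδpos, hδ⟩ := Metric.eventually_nhds_iff.mp this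
    have : δ ≤ t₀ := by
      apply le_csInf hTne
      intro t ht
      by_contra hlt
      push_neg at hlt
      have : γ t ∈ Ω := hδ (by rw [Real.dist_eq, sub_zero, abs_of_nonneg ht.1.1]; exact hlt)
      exact ht.2 this
    linarith
  -- t₀ < 1
  have ht₀lt1 : t₀ < 1 := by
    rcases lt_or_eq_of_le ht₀mem.2 with h | h
    · exact h
    · exfalso; apply hpnot; rw [h]; simpa [hγ] using hb
  -- all parameters below t₀ give points in Ω
  have hbelow : ∀ t, 0 ≤ t → t < t₀ → γ t ∈ Ω := by
    intro t ht0 htlt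
    by_contra hne
    have : t ∈ T := ⟨⟨ht0, le_of_lt (lt_of_lt_of_le htlt ht₀mem.2)⟩, hne⟩
    exact absurd (csInf_le hTbdd this) (not_le.mpr htlt)
  -- p is a frontier point
  have hpfront : γ t₀ ∈ frontier Ω := by
    rw [frontier_eq_closure_inter_closure]
    refine ⟨hsegγ t₀ ht₀mem, ?_⟩
    exact subset_closure hpnot
  obtain ⟨N, hNopen, hpN, hNconv⟩ := hloc _ hpfront
  -- choose s small
  have : ∀ᶠ t in nhds t₀, γ t ∈ N := by
    exact (hγcont.continuousAt).preimage_mem_nhds (hNopen.mem_nhds hpN)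
  obtain ⟨δ, hδpos, hδ⟩ := Metric.eventually_nhds_iff.mp this
  set s : ℝ := min (min (t₀/2) ((1-t₀)/2)) (δ/2) with hs
  have hspos : 0 < s := by
    apply lt_min (lt_min (by linarith) (by linarith)) (by linarith)
  have hslt : s < δ := lt_of_le_of_lt (min_le_right _ _) (by linarith)
  have hs1 : s ≤ t₀/2 := le_trans (min_le_left _ _) (min_le_left _ _)
  have hs2 : s ≤ (1-t₀)/2 := le_trans (min_le_left _ _) (min_le_right _ _)
  set c : E := γ (t₀ - s) with hc
  set d : E := γ (t₀ + s) with hd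
  have hcN : c ∈ N := hδ (by rw [Real.dist_eq]; rw [abs_of_nonpos (by linarith)]; linarith)
  have hdN : d ∈ N := hδ (by rw [Real.dist_eq]; rw [abs_of_nonneg (by linarith)]; linarith)
  have hcΩ : c ∈ Ω := hbelow _ (by linarith) (by linarith)
  have hdcl : d ∈ closure Ω := hsegγ _ ⟨by linarith, by linarith⟩
  -- c ∈ interior (Ω ∩ N), d ∈ closure (Ω ∩ N)
  have hcint : c ∈ interior (Ω ∩ N) := by
    rw [(hopen.inter hNopen).interior_eq]; exact ⟨hcΩ, hcN⟩
  have hdcl' : d ∈ closure (Ω ∩ N) := by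
    have : d ∈ N ∩ closure Ω := ⟨hdN, hdcl⟩
    have h2 := hNopen.inter_closure this
    refine closure_mono ?_ h2
    exact fun z hz => ⟨hz.2, hz.1⟩
  -- midpoint identity
  have hmid : γ t₀ = (1/2 : ℝ) • c + (1/2 : ℝ) • d := by
    simp only [hc, hd, hγ]
    module
  have : γ t₀ ∈ interior (Ω ∩ N) := by
    rw [hmid]
    exact hNconv.combo_interior_closure_mem_interior hcint hdcl'
      (by norm_num) (by norm_num) (by norm_num)
  exact hpnot (interior_subset this).1

end Aux

/-- Tietze–Nakajima: an open connected set in `ℝⁿ` that is locally convex at every boundary point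
is convex. -/
theorem stmt8 {n : ℕ} (Ω : Set (EuclideanSpace ℝ (Fin n))) (hopen : IsOpen Ω)
    (hconn : IsConnected Ω)
    (hloc : ∀ p ∈ frontier Ω, ∃ N : Set (EuclideanSpace ℝ (Fin n)),
      IsOpen N ∧ p ∈ N ∧ Convex ℝ (Ω ∩ N)) :
    Convex ℝ Ω := by
  rw [convex_iff_segment_subset]
  intro x hx y hy
  -- the set of endpoints reachable by segments inside Ω
  set U : Set (EuclideanSpace ℝ (Fin n)) := {z | segment ℝ x z ⊆ Ω} with hU
  set F : Set (EuclideanSpace ℝ (Fin n)) := {z | segment ℝ x z ⊆ closure Ω} with hF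
  have hUF : U ⊆ F := fun z hz => hz.trans subset_closure
  have hFU : ∀ z ∈ Ω, z ∈ F → z ∈ U := fun z hz hzF =>
    tn_key hopen hloc hx hz hzF
  -- U is open
  have hUopen : IsOpen U := by
    rw [Metric.isOpen_iff]
    intro z hz
    have hcpt : IsCompact (segment ℝ x z) := by
      rw [segment_eq_image' ℝ x z]
      exact isCompact_Icc.image (continuous_const.add (continuous_id.smul continuous_const))
    obtain ⟨δ, hδpos, hδ⟩ := hcpt.exists_thickening_subset_open hopen hz
    refine ⟨δ, hδpos, fun w hw => ?_⟩
    intro u hu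
    rw [segment_eq_image_lineMap] at hu
    obtain ⟨t, ht, rfl⟩ := hu
    apply hδ
    rw [Metric.mem_thickening_iff]
    refine ⟨lineMap x z t, (segment_eq_image_lineMap ℝ x z) ▸ mem_image_of_mem _ ht, ?_⟩
    have : (lineMap x w t : EuclideanSpace ℝ (Fin n)) - lineMap x z t = t • (w - z) := by
      simp only [lineMap_apply_module]; module
    rw [dist_eq_norm, this, norm_smul]
    calc ‖t‖ * ‖w - z‖ ≤ 1 * ‖w - z‖ := by
          apply mul_le_mul_of_nonneg_right _ (norm_nonneg _)
          rw [Real.norm_eq_abs, abs_of_nonneg ht.1]; exact ht.2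
      _ < δ := by rw [one_mul, ← dist_eq_norm]; exact mem_ball.mp hw
  -- F is closed
  have hFclosed : IsClosed F := by
    have : F = ⋂ t ∈ Icc (0:ℝ) 1, (fun z => (lineMap x z t : EuclideanSpace ℝ (Fin n))) ⁻¹' closure Ω := by
      ext z
      simp only [hF, mem_setOf_eq, mem_iInter, mem_preimage, segment_eq_image_lineMap]
      constructor
      · intro h t ht; exact h (mem_image_of_mem _ ht)
      · rintro h u ⟨t, ht, rfl⟩; exact h t ht
    rw [this]
    refine isClosed_biInter fun t _ => IsClosed.preimage ?_ isClosed_closure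
    have heq : (fun z : EuclideanSpace ℝ (Fin n) => (lineMap x z t : EuclideanSpace ℝ (Fin n)))
        = fun z => t • (z - x) + x := by
      funext z
      simp only [lineMap_apply_module]
      module
    rw [heq]
    exact (((continuous_id.sub continuous_const).const_smul t).add continuous_const)
  -- connectedness argument
  have hΩU : Ω ⊆ U := by
    by_contra hcon
    rw [Set.not_subset] at hcon
    obtain ⟨z, hzΩ, hzU⟩ := hcon
    have hzF : z ∉ F := fun h => hzU (hFU z hzΩ h)
    have := hconn.isPreconnected U Fᶜ hUopen hFclosed.isOpen_compl
      (fun w hw => by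
        by_cases hwF : w ∈ F
        · exact Or.inl (hFU w hw hwF)
        · exact Or.inr hwF)
      ⟨x, hx, fun u hu => by rw [segment_same] at hu; rwa [mem_singleton_iff.mp hu]⟩
      ⟨z, hzΩ, hzF⟩
    obtain ⟨w, _, hwU, hwF⟩ := this
    exact hwF (hUF hwU)
  exact hΩU hy
end

section
/- Let $q \ge 2$, let $A_{ij} \ge 0$ for $1 \le i < j \le q$ with the graph $\{(i,j) : A_{ij} > 0\}$ connected on $\{1,\dots,q\}$, and suppose the unit vectors $\{\mathbf{n}_{ij}\}_{A_{ij}>0} \subset \mathbb{R}^n$ (with $\mathbf{n}_{ji} = -\mathbf{n}_{ij}$) satisfy the matrix identity $M^T L_A^{-1} M = N$, where $M = \sum_{i<j} A_{ij}(e_i - e_j)\mathbf{n}_{ij}^T$, $N = \sum_{i<j} A_{ij}\mathbf{n}_{ij}\mathbf{n}_{ij}^T$, and $L_A^{-1}$ is the inverse of $L_A = \sum_{i<j} A_{ij}(e_i-e_j)(e_i-e_j)^T$ on $E^{(q-1)}$. Then there exists a linear map $B: E^{(q-1)} \to \mathbb{R}^n$ with $\mathbf{n}_{ij} = B(e_j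 - e_i)$ for all $i \neq j$ with $A_{ij} > 0$. -/
/-!
Put `C = L' M`. Since the columns of `M` lie in `E^{(q-1)}`, `L_A C = M`, and the hypothesis
reads `Mᵀ C = N`. For the residuals `wᵢⱼ = nᵢⱼ - Cᵀ (eᵢ - eⱼ)` this gives
`∑_{i<j} A_{ij} wᵢⱼ wᵢⱼᵀ = N - Mᵀ C - Cᵀ M + Cᵀ L_A C = 0`, and the diagonal of this sum of
positive semidefinite terms shows that `wᵢⱼ = 0` whenever `A_{ij} > 0`; so `B = -Cᵀ` works.
-/

open Matrix

noncomputable section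

/-- `e_i - e_j` as a vector of `ℝ^q`. -/
def dvec (q : ℕ) (i j : Fin q) : Fin q → ℝ :=
  fun k => (if k = i then (1 : ℝ) else 0) - (if k = j then 1 else 0)

/-- The matrix `L_A = ∑_{i<j} A_{ij} (e_i - e_j)(e_i - e_j)ᵀ`. -/
def LAmat {q : ℕ} (A : Fin q → Fin q → ℝ) : Matrix (Fin q) (Fin q) ℝ :=
  ∑ p ∈ Finset.univ.filter (fun p : Fin q × Fin q => p.1 < p.2),
    A p.1 p.2 • Matrix.vecMulVec (dvec q p.1 p.2) (dvec q p.1 p.2)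

/-- The matrix `M = ∑_{i<j} A_{ij} (e_i - e_j) n_{ij}ᵀ`. -/
def Mmat {q n : ℕ} (A : Fin q → Fin q → ℝ) (nv : Fin q → Fin q → (Fin n → ℝ)) :
    Matrix (Fin q) (Fin n) ℝ :=
  ∑ p ∈ Finset.univ.filter (fun p : Fin q × Fin q => p.1 < p.2),
    A p.1 p.2 • Matrix.vecMulVec (dvec q p.1 p.2) (nv p.1 p.2)

/-- The matrix `N = ∑_{i<j} A_{ij} n_{ij} n_{ij}ᵀ`. -/
def Nmat {q n : ℕ} (A : Fin q → Fin q → ℝ) (nv : Fin q → Fin q → (Fin n → ℝ)) :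
    Matrix (Fin n) (Fin n) ℝ :=
  ∑ p ∈ Finset.univ.filter (fun p : Fin q × Fin q => p.1 < p.2),
    A p.1 p.2 • Matrix.vecMulVec (nv p.1 p.2) (nv p.1 p.2)

section WeightedOuterSum

variable {ι m k R : Type*}

def weightedOuterSum [CommSemiring R] (s : Finset ι) (a : ι → R) (u : ι → m → R) (v : ι → k → R) :
    Matrix m k R :=
  ∑ p ∈ s, a p • vecMulVec (u p) (v p)

variable (s : Finset ι)

theorem transpose_weightedOuterSum [CommSemiring R] (a : ι → R) (u : ι → m → R) (v : ι → k → R) :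
    (weightedOuterSum s a u v)ᵀ = weightedOuterSum s a v u := by
  simp only [weightedOuterSum, transpose_sum, transpose_smul, transpose_vecMulVec]

theorem sum_weightedOuterSum_apply_eq_zero [Fintype m] [CommSemiring R] (a : ι → R)
    {y : ι → m → R} (hy : ∀ p ∈ s, ∑ i, y p i = 0) (x : ι → k → R) (c : k) :
    ∑ i, weightedOuterSum s a y x i c = 0 := by
  simp only [weightedOuterSum, Matrix.sum_apply, Matrix.smul_apply, vecMulVec_apply, smul_eq_mul]
  rw [Finset.sum_comm]
  refine Finset.sum_eq_zero fun p hp => ?_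
  simp only [← Finset.mul_sum, ← Finset.sum_mul, hy p hp, zero_mul, mul_zero]

theorem weightedOuterSum_residual [Fintype m] [CommRing R] (a : ι → R)
    (x : ι → k → R) (y : ι → m → R) (C : Matrix m k R) :
    weightedOuterSum s a (fun p => x p - Cᵀ *ᵥ y p) (fun p => x p - Cᵀ *ᵥ y p) =
      weightedOuterSum s a x x - (weightedOuterSum s a y x)ᵀ * C
        - Cᵀ * weightedOuterSum s a y x + Cᵀ * weightedOuterSum s a y y * C := by
  have expand : ∀ p, vecMulVec (x p - Cᵀ *ᵥ y p) (x p - Cᵀ *ᵥ y p) =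
      vecMulVec (x p) (x p) - vecMulVec (x p) (y p) * C - Cᵀ * vecMulVec (y p) (x p)
        + Cᵀ * vecMulVec (y p) (y p) * C := by
    intro p
    simp only [sub_vecMulVec, vecMulVec_sub, mul_vecMulVec, vecMulVec_mul, mulVec_transpose]
    abel
  simp only [weightedOuterSum, expand, transpose_sum, transpose_smul, transpose_vecMulVec,
    smul_sub, smul_add, Finset.sum_sub_distrib, Finset.sum_add_distrib, Matrix.sum_mul,
    Matrix.mul_sum, Matrix.smul_mul, Matrix.mul_smul]

theorem eq_zero_of_weightedOuterSum_self_eq_zero [CommRing R] [LinearOrder R]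
    [IsStrictOrderedRing R] {a : ι → R} (ha : ∀ p ∈ s, 0 ≤ a p) {w : ι → k → R}
    (hw : weightedOuterSum s a w w = 0)
    {p : ι} (hp : p ∈ s) (hap : 0 < a p) : w p = 0 := by
  funext c
  have hdiag : ∑ p ∈ s, a p * (w p c * w p c) = 0 := by
    simpa [weightedOuterSum, Matrix.sum_apply, vecMulVec_apply] using congrFun (congrFun hw c) c
  have := (Finset.sum_eq_zero_iff_of_nonneg fun p hp =>
    mul_nonneg (ha p hp) (mul_self_nonneg (w p c))).1 hdiag p hp
  simpa [hap.ne'] using this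

/-- The equality case of the matrix Cauchy–Schwarz inequality `Mᵀ L⁻¹ M ≤ N`, with `C = L⁻¹ M`. -/
theorem eq_transpose_mulVec_of_weightedOuterSum [Fintype m] [CommRing R] [LinearOrder R]
    [IsStrictOrderedRing R] {a : ι → R} (ha : ∀ p ∈ s, 0 ≤ a p) {x : ι → k → R}
    {y : ι → m → R} {C : Matrix m k R}
    (hLC : weightedOuterSum s a y y * C = weightedOuterSum s a y x)
    (hMC : (weightedOuterSum s a y x)ᵀ * C = weightedOuterSum s a x x)
    {p : ι} (hp : p ∈ s) (hap : 0 < a p) : x p = Cᵀ *ᵥ y p := by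
  have hCM : Cᵀ * weightedOuterSum s a y x = weightedOuterSum s a x x := by
    rw [← transpose_transpose (Cᵀ * _), transpose_mul, transpose_transpose, hMC,
      transpose_weightedOuterSum]
  have hres : weightedOuterSum s a (fun p => x p - Cᵀ *ᵥ y p) (fun p => x p - Cᵀ *ᵥ y p) = 0 := by
    rw [weightedOuterSum_residual, Matrix.mul_assoc Cᵀ, hLC, hMC, hCM]
    abel
  exact sub_eq_zero.1 (eq_zero_of_weightedOuterSum_self_eq_zero s ha hres hp hap)

end WeightedOuterSum

theorem mul_mul_eq_self_of_mulVec_mulVec {m k R : Type*} [Fintype m] [Semiring R]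
    {L L' : Matrix m m R} (h : ∀ v : m → R, ∑ i, v i = 0 → L *ᵥ (L' *ᵥ v) = v)
    {X : Matrix m k R} (hX : ∀ c, ∑ i, X i c = 0) : L * (L' * X) = X := by
  ext i c
  simpa [Matrix.mul_apply, mulVec, dotProduct] using congrFun (h (fun j => X j c) (hX c)) i

theorem sum_dvec {q : ℕ} (i j : Fin q) : ∑ k, dvec q i j k = 0 := by
  simp [dvec, Finset.sum_sub_distrib]

theorem dvec_swap {q : ℕ} (i j : Fin q) : dvec q j i = -dvec q i j := by
  funext k
  simp [dvec]

theorem LAmat_eq_weightedOuterSum {q : ℕ} (A : Fin q → Fin q → ℝ) :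
    LAmat A = weightedOuterSum ({p | p.1 < p.2} : Finset (Fin q × Fin q)) (fun p => A p.1 p.2)
      (fun p => dvec q p.1 p.2) (fun p => dvec q p.1 p.2) := rfl

theorem Mmat_eq_weightedOuterSum {q n : ℕ} (A : Fin q → Fin q → ℝ)
    (nv : Fin q → Fin q → (Fin n → ℝ)) :
    Mmat A nv = weightedOuterSum ({p | p.1 < p.2} : Finset (Fin q × Fin q)) (fun p => A p.1 p.2)
      (fun p => dvec q p.1 p.2) (fun p => nv p.1 p.2) := rfl

theorem Nmat_eq_weightedOuterSum {q n : ℕ} (A : Fin q → Fin q → ℝ)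
    (nv : Fin q → Fin q → (Fin n → ℝ)) :
    Nmat A nv = weightedOuterSum ({p | p.1 < p.2} : Finset (Fin q × Fin q)) (fun p => A p.1 p.2)
      (fun p => nv p.1 p.2) (fun p => nv p.1 p.2) := rfl

theorem stmt18_general {q n : ℕ}
    (A : Fin q → Fin q → ℝ) (hA : ∀ i j, 0 ≤ A i j) (hAsymm : ∀ i j, A i j = A j i)
    (nv : Fin q → Fin q → (Fin n → ℝ))
    (hanti : ∀ i j, nv j i = -nv i j)
    (L' : Matrix (Fin q) (Fin q) ℝ)
    (hL'inv : ∀ v : Fin q → ℝ, (∑ i, v i = 0) →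
      LAmat A *ᵥ (L' *ᵥ v) = v ∧ L' *ᵥ (LAmat A *ᵥ v) = v)
    (heq : (Mmat A nv)ᵀ * L' * Mmat A nv = Nmat A nv) :
    ∃ B : (Fin q → ℝ) →ₗ[ℝ] (Fin n → ℝ),
      ∀ i j, i ≠ j → 0 < A i j → nv i j = B (dvec q j i) := by
  set C := L' * Mmat A nv
  have hLC : LAmat A * C = Mmat A nv :=
    mul_mul_eq_self_of_mulVec_mulVec (fun v hv => (hL'inv v hv).1) (by
      rw [Mmat_eq_weightedOuterSum]
      exact sum_weightedOuterSum_apply_eq_zero _ _ (fun p _ => sum_dvec p.1 p.2) _)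
  have hMC : (Mmat A nv)ᵀ * C = Nmat A nv := (Matrix.mul_assoc _ _ _).symm.trans heq
  rw [LAmat_eq_weightedOuterSum, Mmat_eq_weightedOuterSum] at hLC
  rw [Mmat_eq_weightedOuterSum, Nmat_eq_weightedOuterSum] at hMC
  have key : ∀ i j, i < j → 0 < A i j → nv i j = Cᵀ *ᵥ dvec q i j := fun i j hij hpos =>
    eq_transpose_mulVec_of_weightedOuterSum (p := (i, j)) _ (fun p _ => hA p.1 p.2) hLC hMC
      (by simpa using hij) hpos
  refine ⟨-(Cᵀ).mulVecLin, fun i j hne hpos => ?_⟩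
  rcases hne.lt_or_gt with hij | hji
  · rw [key i j hij hpos, LinearMap.neg_apply, mulVecLin_apply, dvec_swap, mulVec_neg]
  · rw [hanti j i, key j i hji (hAsymm i j ▸ hpos), LinearMap.neg_apply, mulVecLin_apply]

/-- Equality case of the matrix Cauchy–Schwarz inequality for the normals of a cluster:
if `A_{ij} ≥ 0` is symmetric with connected positivity graph, the `n_{ij}` are antisymmetric and
unit vectors when `A_{ij} > 0`, `L'` inverts `L_A` on `E^{(q-1)}`, and `Mᵀ L_A⁻¹ M = N`, then
there is a linear map `B` with `n_{ij} = B(e_j - e_i)` whenever `A_{ij} > 0`. -/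
theorem stmt18 {q n : ℕ} (hq : 2 ≤ q)
    (A : Fin q → Fin q → ℝ) (hA : ∀ i j, 0 ≤ A i j) (hAsymm : ∀ i j, A i j = A j i)
    (nv : Fin q → Fin q → (Fin n → ℝ))
    (hanti : ∀ i j, nv j i = -nv i j)
    (hunit : ∀ i j, i ≠ j → 0 < A i j → ∑ a, (nv i j a) ^ 2 = 1)
    (hconn : (SimpleGraph.fromRel fun i j => 0 < A i j).Connected)
    (L' : Matrix (Fin q) (Fin q) ℝ)
    (hL'inv : ∀ v : Fin q → ℝ, (∑ i, v i = 0) →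
      LAmat A *ᵥ (L' *ᵥ v) = v ∧ L' *ᵥ (LAmat A *ᵥ v) = v)
    (hL'E : ∀ v : Fin q → ℝ, (∑ i, v i = 0) → ∑ i, (L' *ᵥ v) i = 0)
    (heq : (Mmat A nv)ᵀ * L' * Mmat A nv = Nmat A nv) :
    ∃ B : (Fin q → ℝ) →ₗ[ℝ] (Fin n → ℝ),
      ∀ i j, i ≠ j → 0 < A i j → nv i j = B (dvec q j i) :=
  stmt18_general A hA hAsymm nv hanti L' hL'inv heq

end
end
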